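/- Let n be a positive integer and let ρ and σ be n×n positive definite complex matrices with trace 1. Then the set { Tr(ρ² (U*σU)⁻¹) : U an n×n unitary matrix } is exactly the closed real interval [ Σ_{i=1}^n λ↓ᵢ(ρ)²/λ↓ᵢ(σ) , Σ_{i=1}^n λ↓ᵢ(ρ)²/λ↑ᵢ(σ) ]. (This is the unitary-orbit range theorem for the maximal quantum f-divergence with the operator convex function f(x) = x², for which Ŝ_f(ρ‖σ) = Tr(σ⁻¹ρ²).) -/

import Mathlib

/-!
Diagonalize `ρ = V diag(r) V*` and `σ = W diag(d) W*`. Then `Tr(ρ² (U*σU)⁻¹)` equals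
`Σᵢⱼ rᵢ² dⱼ⁻¹ |Qᵢⱼ|²` with `Q = V*U*W` unitary, so `(|Qᵢⱼ|²)` is doubly stochastic. By
Birkhoff's theorem the value is a convex combination of the sums `Σᵢ rᵢ² / d_{π i}` over
permutations `π`, which the rearrangement inequality bounds by the two stated sums (the
increasing ordering of the eigenvalues of `σ` is the reverse of the decreasing one, as the
characteristic polynomial shows). Conversely, `Q(θ) = cos θ • 1 + sin θ • iJ`, with `J` the
reversal permutation matrix, is a continuous path of unitaries joining the two extremes, and
the intermediate value theorem fills in the interval.
-/

open Matrix
open scoped ComplexOrder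

theorem Fin.eq_comp_rev_of_multiset_map_eq {α : Type*} [LinearOrder α] {n : ℕ} {d e : Fin n → α}
    (hd : Antitone d) (he : Monotone e) (h : Finset.univ.val.map d = Finset.univ.val.map e) :
    e = d ∘ Fin.rev := by
  have hrev : Finset.univ.val.map Fin.rev = Finset.univ.val :=
    Multiset.map_univ_val_equiv (Fin.revPerm (n := n))
  have hperm : (List.ofFn (d ∘ Fin.rev)).Perm (List.ofFn e) := by
    rw [← Multiset.coe_eq_coe, ← Fin.univ_val_map, ← Fin.univ_val_map, ← h, ← Multiset.map_map,
      hrev]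
  have hsorted : (List.ofFn (d ∘ Fin.rev)).SortedLE :=
    List.sortedLE_ofFn_iff.2 fun _ _ hij => hd (Fin.rev_le_rev.2 hij)
  exact (List.ofFn_injective (hperm.eq_of_sortedLE hsorted (List.sortedLE_ofFn_iff.2 he))).symm

namespace Matrix

variable {ι : Type*}

def normSqMatrix (Q : Matrix ι ι ℂ) : Matrix ι ι ℝ := Q.map Complex.normSq

lemma normSqMatrix_permMatrix [DecidableEq ι] (π : Equiv.Perm ι) :
    normSqMatrix (π.permMatrix ℂ) = π.permMatrix ℝ := by
  ext i j
  simp [normSqMatrix, Equiv.Perm.permMatrix, PEquiv.toMatrix_apply]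

variable [Fintype ι] [DecidableEq ι]

section Unitary

variable {A W : Matrix ι ι ℂ} (hW : W ∈ unitaryGroup ι ℂ)
include hW

lemma conjTranspose_mul_self_of_mem_unitaryGroup : Wᴴ * W = 1 :=
  Unitary.star_mul_self_of_mem hW

lemma mul_conjTranspose_self_of_mem_unitaryGroup : W * Wᴴ = 1 :=
  Unitary.mul_star_self_of_mem hW

lemma eq_mul_diagonal_mul_conjTranspose_of_conjTranspose_mul_mul_eq {d : ι → ℂ}
    (h : Wᴴ * A * W = diagonal d) : A = W * diagonal d * Wᴴ := by
  rw [← h, ← mul_assoc, ← mul_assoc, mul_conjTranspose_self_of_mem_unitaryGroup hW, one_mul,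
    mul_assoc, mul_conjTranspose_self_of_mem_unitaryGroup hW, mul_one]

lemma mul_diagonal_mul_conjTranspose_sq (d : ι → ℂ) :
    (W * diagonal d * Wᴴ) ^ 2 = W * diagonal (d ^ 2) * Wᴴ := by
  calc (W * diagonal d * Wᴴ) ^ 2 = W * (diagonal d * (Wᴴ * W) * diagonal d) * Wᴴ := by
        simp only [sq, mul_assoc]
    _ = W * diagonal (d ^ 2) * Wᴴ := by
        rw [conjTranspose_mul_self_of_mem_unitaryGroup hW, mul_one, diagonal_mul_diagonal, sq]
        rfl

lemma inv_mul_diagonal_mul_conjTranspose {d : ι → ℂ} (hd : ∀ i, d i ≠ 0) :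
    (W * diagonal d * Wᴴ)⁻¹ = W * diagonal d⁻¹ * Wᴴ := by
  refine inv_eq_left_inv ?_
  calc W * diagonal d⁻¹ * Wᴴ * (W * diagonal d * Wᴴ)
      = W * (diagonal d⁻¹ * (Wᴴ * W) * diagonal d) * Wᴴ := by simp only [mul_assoc]
    _ = 1 := by
        rw [conjTranspose_mul_self_of_mem_unitaryGroup hW, mul_one, diagonal_mul_diagonal,
          show (fun i => d⁻¹ i * d i) = fun _ => 1 from funext fun i => inv_mul_cancel₀ (hd i),
          diagonal_one, mul_one, mul_conjTranspose_self_of_mem_unitaryGroup hW]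

lemma pos_of_conjTranspose_mul_mul_eq_diagonal {d : ι → ℝ} (hA : A.PosDef)
    (h : Wᴴ * A * W = diagonal fun i => (d i : ℂ)) (i : ι) : 0 < d i := by
  have hpos := hA.conjTranspose_mul_mul_same
    (mulVec_injective_of_isUnit (Unitary.isUnit_coe (U := ⟨W, hW⟩)))
  rw [h, posDef_diagonal_iff] at hpos
  exact_mod_cast hpos i

open Polynomial in
lemma roots_charpoly_of_conjTranspose_mul_mul_eq_diagonal {d : ι → ℂ}
    (h : Wᴴ * A * W = diagonal d) : A.charpoly.roots = Finset.univ.val.map d := by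
  rw [eq_mul_diagonal_mul_conjTranspose_of_conjTranspose_mul_mul_eq hW h, mul_assoc,
    charpoly_mul_comm, mul_assoc, conjTranspose_mul_self_of_mem_unitaryGroup hW, mul_one,
    charpoly_diagonal, Finset.prod_eq_multiset_prod,
    ← roots_multiset_prod_X_sub_C (Finset.univ.val.map d), Multiset.map_map]
  rfl

end Unitary

theorem eq_comp_rev_of_conjTranspose_mul_mul_eq_diagonal {n : ℕ}
    {A W₁ W₂ : Matrix (Fin n) (Fin n) ℂ} {d e : Fin n → ℝ} (hd : Antitone d) (he : Monotone e)
    (hW₁ : W₁ ∈ unitaryGroup (Fin n) ℂ) (hW₂ : W₂ ∈ unitaryGroup (Fin n) ℂ)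
    (h₁ : W₁ᴴ * A * W₁ = diagonal fun i => (d i : ℂ))
    (h₂ : W₂ᴴ * A * W₂ = diagonal fun i => (e i : ℂ)) :
    e = d ∘ Fin.rev := by
  have h : Finset.univ.val.map (Complex.ofReal ∘ d) = Finset.univ.val.map (Complex.ofReal ∘ e) :=
    (roots_charpoly_of_conjTranspose_mul_mul_eq_diagonal hW₁ h₁).symm.trans
      (roots_charpoly_of_conjTranspose_mul_mul_eq_diagonal hW₂ h₂)
  rw [← Multiset.map_map, ← Multiset.map_map] at h
  exact Fin.eq_comp_rev_of_multiset_map_eq hd he (Multiset.map_injective Complex.ofReal_injective h)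

lemma trace_diagonal_mul_mul_diagonal_mul_conjTranspose (a b : ι → ℝ) (Q : Matrix ι ι ℂ) :
    (diagonal (fun i => (a i : ℂ)) * Q * diagonal (fun j => (b j : ℂ)) * Qᴴ).trace =
      (a ⬝ᵥ normSqMatrix Q *ᵥ b : ℝ) := by
  simp only [trace, diag, dotProduct, mulVec, Finset.mul_sum, Complex.ofReal_sum]
  refine Finset.sum_congr rfl fun i _ => ?_
  rw [mul_apply]
  refine Finset.sum_congr rfl fun j _ => ?_
  rw [mul_diagonal, diagonal_mul, conjTranspose_apply, normSqMatrix, map_apply]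
  push_cast
  rw [Complex.normSq_eq_conj_mul_self, Complex.star_def]
  ring

lemma trace_mul_diagonal_mul_conjTranspose_mul (V X : Matrix ι ι ℂ) (a b : ι → ℝ) :
    (V * diagonal (fun i => (a i : ℂ)) * Vᴴ * (X * diagonal (fun j => (b j : ℂ)) * Xᴴ)).trace =
      (a ⬝ᵥ normSqMatrix (Vᴴ * X) *ᵥ b : ℝ) := by
  rw [← trace_diagonal_mul_mul_diagonal_mul_conjTranspose, conjTranspose_mul,
    conjTranspose_conjTranspose, mul_assoc, mul_assoc, trace_mul_comm]
  simp only [mul_assoc]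

theorem trace_sq_mul_inv_conjTranspose_mul_mul {ρ σ V W U : Matrix ι ι ℂ} {r d : ι → ℝ}
    (hV : V ∈ unitaryGroup ι ℂ) (hW : W ∈ unitaryGroup ι ℂ) (hU : U ∈ unitaryGroup ι ℂ)
    (hVρ : Vᴴ * ρ * V = diagonal fun i => (r i : ℂ))
    (hWσ : Wᴴ * σ * W = diagonal fun i => (d i : ℂ)) (hd : ∀ i, d i ≠ 0) :
    (ρ ^ 2 * (Uᴴ * σ * U)⁻¹).trace = (r ^ 2 ⬝ᵥ normSqMatrix (Vᴴ * Uᴴ * W) *ᵥ d⁻¹ : ℝ) := by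
  have hUW : Uᴴ * W ∈ unitaryGroup ι ℂ := mul_mem (Unitary.star_mem hU) hW
  have hσU : Uᴴ * σ * U = Uᴴ * W * diagonal (fun i => (d i : ℂ)) * (Uᴴ * W)ᴴ := by
    rw [eq_mul_diagonal_mul_conjTranspose_of_conjTranspose_mul_mul_eq hW hWσ, conjTranspose_mul,
      conjTranspose_conjTranspose]
    simp only [mul_assoc]
  rw [eq_mul_diagonal_mul_conjTranspose_of_conjTranspose_mul_mul_eq hV hVρ,
    mul_diagonal_mul_conjTranspose_sq hV, hσU,
    inv_mul_diagonal_mul_conjTranspose hUW (fun i => Complex.ofReal_ne_zero.2 (hd i)), mul_assoc Vᴴ,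
    ← trace_mul_diagonal_mul_conjTranspose_mul]
  congr <;> ext <;> simp

lemma sum_normSq_row_eq_one {Q : Matrix ι ι ℂ} (hQ : Q * Qᴴ = 1) (i : ι) :
    ∑ j, Complex.normSq (Q i j) = 1 := by
  have h := congr_fun₂ hQ i i
  simp only [mul_apply, conjTranspose_apply, one_apply_eq, Complex.star_def,
    Complex.mul_conj] at h
  exact_mod_cast h

lemma normSqMatrix_mem_doublyStochastic {Q : Matrix ι ι ℂ} (hQ : Q ∈ unitaryGroup ι ℂ) :
    normSqMatrix Q ∈ doublyStochastic ℝ ι := by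
  refine mem_doublyStochastic_iff_sum.2 ⟨fun i j => Complex.normSq_nonneg _,
    sum_normSq_row_eq_one (mul_conjTranspose_self_of_mem_unitaryGroup hQ), fun j => ?_⟩
  simpa [normSqMatrix, Complex.normSq_conj] using
    sum_normSq_row_eq_one (Q := Qᴴ)
      (by simpa using conjTranspose_mul_self_of_mem_unitaryGroup hQ) j

lemma dotProduct_permMatrix_mulVec {R : Type*} [CommRing R] (a b : ι → R) (π : Equiv.Perm ι) :
    a ⬝ᵥ π.permMatrix R *ᵥ b = ∑ i, a i * b (π i) := by
  rw [permMatrix_mulVec]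
  rfl

section Rearrangement

variable {a b : ι → ℝ} {s : Matrix ι ι ℝ}

theorem _root_.Monovary.dotProduct_mulVec_le (hab : Monovary a b)
    (hs : s ∈ doublyStochastic ℝ ι) : a ⬝ᵥ s *ᵥ b ≤ a ⬝ᵥ b := by
  have hconv : Convex ℝ {s : Matrix ι ι ℝ | a ⬝ᵥ s *ᵥ b ≤ a ⬝ᵥ b} :=
    convex_halfSpace_le ⟨fun s t => by simp [add_mulVec], fun c s => by simp [smul_mulVec]⟩ _
  rw [← SetLike.mem_coe, doublyStochastic_eq_convexHull_permMatrix] at hs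
  refine convexHull_min ?_ hconv hs
  rintro _ ⟨π, rfl⟩
  rw [Set.mem_ofPred_eq, dotProduct_permMatrix_mulVec]
  exact hab.sum_mul_comp_perm_le_sum_mul

theorem _root_.Antivary.le_dotProduct_mulVec (hab : Antivary a b)
    (hs : s ∈ doublyStochastic ℝ ι) : a ⬝ᵥ b ≤ a ⬝ᵥ s *ᵥ b := by
  simpa [mulVec_neg] using hab.neg_right.dotProduct_mulVec_le hs

end Rearrangement

lemma cos_smul_one_add_sin_smul_mem_unitaryGroup {K : Matrix ι ι ℂ} (hK : Kᴴ = -K)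
    (hKK : K * K = -1) (θ : ℝ) :
    Real.cos θ • (1 : Matrix ι ι ℂ) + Real.sin θ • K ∈ unitaryGroup ι ℂ := by
  have hstar : star (Real.cos θ • (1 : Matrix ι ι ℂ) + Real.sin θ • K) =
      Real.cos θ • 1 - Real.sin θ • K := by
    rw [star_add, star_smul, star_smul, star_one, star_eq_conjTranspose K, hK, smul_neg,
      star_trivial, star_trivial, sub_eq_add_neg]
  rw [mem_unitaryGroup_iff, hstar]
  simp only [add_mul, mul_sub, smul_mul_smul_comm, one_mul, mul_one, hKK]
  match_scalars
  · linear_combination Real.cos_sq_add_sin_sq θ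
  · ring

lemma exists_mem_unitaryGroup_dotProduct_normSqMatrix_mulVec_eq (a b : ι → ℝ)
    {π : Equiv.Perm ι} (hπ : Function.Involutive π) {t : ℝ}
    (ht : t ∈ Set.uIcc (∑ i, a i * b i) (∑ i, a i * b (π i))) :
    ∃ Q ∈ unitaryGroup ι ℂ, a ⬝ᵥ normSqMatrix Q *ᵥ b = t := by
  have hππ : π * π = 1 := Equiv.ext hπ
  set K := Complex.I • π.permMatrix ℂ
  have hK : Kᴴ = -K := by
    rw [conjTranspose_smul, conjTranspose_permMatrix, inv_eq_of_mul_eq_one_right hππ]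
    simp [K]
  have hKK : K * K = -1 := by
    rw [smul_mul_smul_comm, ← permMatrix_mul, hππ, permMatrix_one, Complex.I_mul_I, neg_one_smul]
  set Q : ℝ → Matrix ι ι ℂ := fun θ => Real.cos θ • (1 : Matrix ι ι ℂ) + Real.sin θ • K
  set g : ℝ → ℝ := fun θ => a ⬝ᵥ normSqMatrix (Q θ) *ᵥ b
  have hg : Continuous g := by
    simp only [g, Q, normSqMatrix]
    fun_prop
  have hg₀ : g 0 = ∑ i, a i * b i := by
    simp only [g, Q, Real.cos_zero, Real.sin_zero, one_smul, zero_smul, add_zero,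
      ← permMatrix_one, normSqMatrix_permMatrix, dotProduct_permMatrix_mulVec]
    rfl
  have hg₁ : g (Real.pi / 2) = ∑ i, a i * b (π i) := by
    simp only [g, Q, Real.cos_pi_div_two, Real.sin_pi_div_two, one_smul, zero_smul, zero_add]
    rw [← dotProduct_permMatrix_mulVec, ← normSqMatrix_permMatrix]
    congr 2
    ext i j
    simp [K, normSqMatrix, apply_ite Complex.normSq]
  rw [← hg₀, ← hg₁] at ht
  obtain ⟨θ, -, rfl⟩ := intermediate_value_uIcc hg.continuousOn ht
  exact ⟨Q θ, cos_smul_one_add_sin_smul_mem_unitaryGroup hK hKK θ, rfl⟩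

end Matrix

theorem stmt19_general (n : ℕ)
    (ρ σ : Matrix (Fin n) (Fin n) ℂ)
    (hρ : ρ.PosDef) (hσ : σ.PosDef)
    (r d e : Fin n → ℝ) (hr : Antitone r) (hd : Antitone d) (he : Monotone e)
    (V W₁ W₂ : Matrix (Fin n) (Fin n) ℂ)
    (hV : V ∈ Matrix.unitaryGroup (Fin n) ℂ)
    (hW₁ : W₁ ∈ Matrix.unitaryGroup (Fin n) ℂ)
    (hW₂ : W₂ ∈ Matrix.unitaryGroup (Fin n) ℂ)
    (hVρ : Vᴴ * ρ * V = Matrix.diagonal (fun i => (r i : ℂ)))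
    (hW₁σ : W₁ᴴ * σ * W₁ = Matrix.diagonal (fun i => (d i : ℂ)))
    (hW₂σ : W₂ᴴ * σ * W₂ = Matrix.diagonal (fun i => (e i : ℂ))) :
    {z : ℂ | ∃ U ∈ Matrix.unitaryGroup (Fin n) ℂ, (ρ ^ 2 * (Uᴴ * σ * U)⁻¹).trace = z} =
      Complex.ofReal '' Set.Icc (∑ i, r i ^ 2 / d i) (∑ i, r i ^ 2 / e i) := by
  have hr₀ := pos_of_conjTranspose_mul_mul_eq_diagonal hV hρ hVρ
  have hd₀ := pos_of_conjTranspose_mul_mul_eq_diagonal hW₁ hσ hW₁σ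
  have he₀ := pos_of_conjTranspose_mul_mul_eq_diagonal hW₂ hσ hW₂σ
  have hr' : Antitone (r ^ 2) := fun i j hij => pow_le_pow_left₀ (hr₀ j).le (hr hij) 2
  have hd' : Monotone d⁻¹ := fun i j hij => inv_anti₀ (hd₀ j) (hd hij)
  have he' : Antitone e⁻¹ := fun i j hij => inv_anti₀ (he₀ i) (he hij)
  have hval₁ (U) (hU : U ∈ unitaryGroup (Fin n) ℂ) :=
    trace_sq_mul_inv_conjTranspose_mul_mul hV hW₁ hU hVρ hW₁σ (hd₀ · |>.ne')
  have hval₂ (U) (hU : U ∈ unitaryGroup (Fin n) ℂ) :=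
    trace_sq_mul_inv_conjTranspose_mul_mul hV hW₂ hU hVρ hW₂σ (he₀ · |>.ne')
  have hsum (c : Fin n → ℝ) : ∑ i, r i ^ 2 / c i = r ^ 2 ⬝ᵥ c⁻¹ := by
    simp [dotProduct, div_eq_mul_inv]
  ext z
  constructor
  · rintro ⟨U, hU, rfl⟩
    have hS (W) (hW : W ∈ unitaryGroup (Fin n) ℂ) := normSqMatrix_mem_doublyStochastic
      (mul_mem (mul_mem (Unitary.star_mem hV) (Unitary.star_mem hU)) hW)
    refine ⟨_, ⟨?_, ?_⟩, (hval₁ U hU).symm⟩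
    · rw [hsum]
      exact (hr'.antivary hd').le_dotProduct_mulVec (hS W₁ hW₁)
    · rw [Complex.ofReal_injective ((hval₁ U hU).symm.trans (hval₂ U hU)), hsum]
      exact (hr'.monovary he').dotProduct_mulVec_le (hS W₂ hW₂)
  · rintro ⟨t, ht, rfl⟩
    rw [hsum, hsum, eq_comp_rev_of_conjTranspose_mul_mul_eq_diagonal hd he hW₁ hW₂ hW₁σ hW₂σ] at ht
    obtain ⟨Q, hQ, rfl⟩ := exists_mem_unitaryGroup_dotProduct_normSqMatrix_mulVec_eq (r ^ 2) d⁻¹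
      (π := Fin.revPerm) Fin.rev_involutive (Set.Icc_subset_uIcc ht)
    have hU : W₁ * Qᴴ * Vᴴ ∈ unitaryGroup (Fin n) ℂ :=
      mul_mem (mul_mem hW₁ (Unitary.star_mem hQ)) (Unitary.star_mem hV)
    refine ⟨_, hU, ?_⟩
    rw [hval₁ _ hU]
    congr
    simp only [conjTranspose_mul, conjTranspose_conjTranspose, ← mul_assoc, mul_assoc Q,
      conjTranspose_mul_self_of_mem_unitaryGroup hV, conjTranspose_mul_self_of_mem_unitaryGroup hW₁,
      one_mul, mul_one]

/-- the set of values `Tr(ρ²(U*σU)⁻¹)` over the unitary group is exactly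
the closed real interval `[Σᵢ λ↓ᵢ(ρ)²/λ↓ᵢ(σ), Σᵢ λ↓ᵢ(ρ)²/λ↑ᵢ(σ)]` (embedded in `ℂ`). -/
theorem stmt19 (n : ℕ) (hn : 0 < n)
    (ρ σ : Matrix (Fin n) (Fin n) ℂ)
    (hρ : ρ.PosDef) (hσ : σ.PosDef)
    (hρtr : ρ.trace = 1) (hσtr : σ.trace = 1)
    (r d e : Fin n → ℝ) (hr : Antitone r) (hd : Antitone d) (he : Monotone e)
    (V W₁ W₂ : Matrix (Fin n) (Fin n) ℂ)
    (hV : V ∈ Matrix.unitaryGroup (Fin n) ℂ)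
    (hW₁ : W₁ ∈ Matrix.unitaryGroup (Fin n) ℂ)
    (hW₂ : W₂ ∈ Matrix.unitaryGroup (Fin n) ℂ)
    (hVρ : Vᴴ * ρ * V = Matrix.diagonal (fun i => (r i : ℂ)))
    (hW₁σ : W₁ᴴ * σ * W₁ = Matrix.diagonal (fun i => (d i : ℂ)))
    (hW₂σ : W₂ᴴ * σ * W₂ = Matrix.diagonal (fun i => (e i : ℂ))) :
    {z : ℂ | ∃ U ∈ Matrix.unitaryGroup (Fin n) ℂ, (ρ ^ 2 * (Uᴴ * σ * U)⁻¹).trace = z} =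
      Complex.ofReal '' Set.Icc (∑ i, r i ^ 2 / d i) (∑ i, r i ^ 2 / e i) :=
  stmt19_general n ρ σ hρ hσ r d e hr hd he V W₁ W₂ hV hW₁ hW₂ hVρ hW₁σ hW₂σ
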